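/- Let (A, (f,g)) be a dibaric algebra such that f ≠ g (i.e., A is dibaric but not baric via f = g). Then J_f ∩ J_g = {0}, i.e., the only linear form that is simultaneously f-invariant and g-invariant is the zero form. -/

import Mathlib

theorem LinearMap.eq_zero_of_apply_mul_add_apply_mul_eq_zero {R M : Type*} [CommRing R]
    [NoZeroDivisors R] [NeZero (2 : R)] [AddCommGroup M] [Module R M] {u F : M →ₗ[R] R}
    (hu : u ≠ 0) (h : ∀ x y, u x * F y + u y * F x = 0) : F = 0 := by
  obtain ⟨x, hx⟩ : ∃ x, u x ≠ 0 := by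
    by_contra! hzero
    exact hu (LinearMap.ext hzero)
  have hFx : F x = 0 := by
    have hxx : 2 * (u x * F x) = 0 := by rw [two_mul]; exact h x x
    exact (mul_eq_zero.mp ((mul_eq_zero.mp hxx).resolve_left two_ne_zero)).resolve_left hx
  ext y
  have hxy := h x y
  rw [hFx, mul_zero, add_zero] at hxy
  exact (mul_eq_zero.mp hxy).resolve_left hx

theorem stmt_3 (A : Type*) [AddCommGroup A] [Module ℝ A]
    (mul : A →ₗ[ℝ] A →ₗ[ℝ] A)
    (f g : A →ₗ[ℝ] ℝ)
    (hfg : f ≠ g)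
    (F : A →ₗ[ℝ] ℝ)
    (hFf : ∀ x y : A, F (mul x y) = (f x * F y + f y * F x) / 2)
    (hFg : ∀ x y : A, F (mul x y) = (g x * F y + g y * F x) / 2) :
    F = 0 := by
  refine LinearMap.eq_zero_of_apply_mul_add_apply_mul_eq_zero (sub_ne_zero.mpr hfg) fun x y => ?_
  have hinv := (hFf x y).symm.trans (hFg x y)
  simp only [LinearMap.sub_apply]
  linarith
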